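/- Let X be a pure d-dimensional finite simplicial complex and let σ ∈ X_j be a j-simplex. For any k-cochains α₁,…,α_m ∈ C^k(X; F₂) and any cochains β₁,…,β_m ∈ C^{k−j−1}(X_σ; F₂): if ‖⋃_a α_a‖ ≤ ‖⋃_a (α_a + I^σ(β_a))‖, then ‖⋃_a I_σ(α_a)‖_σ ≤ ‖⋃_a (I_σ(α_a) + β_a)‖_σ. -/
import Mathlib


/-- A finite (abstract) simplicial complex on vertex set `V`, given by its finite,
downward-closed set of faces (including the empty face when nonempty). -/
structure SComplex (V : Type) where
  faces : Finset (Finset V)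
  down_closed : ∀ s ∈ faces, ∀ t ⊆ s, t ∈ faces

namespace SComplex

variable {V : Type} [DecidableEq V]

/-- `K` is pure of dimension `d`: every face has at most `d+1` vertices and is contained
in a face with exactly `d+1` vertices. -/
def IsPure (K : SComplex V) (d : ℕ) : Prop :=
  ∀ s ∈ K.faces, s.card ≤ d + 1 ∧ ∃ t ∈ K.faces, t.card = d + 1 ∧ s ⊆ t

/-- The weight of a face `s` of a (pure `d`-dimensional) complex:
`w(s) = #{τ ∈ X_d : s ⊆ τ} / (C(d+1, |s|) · |X_d|)`. -/
noncomputable def wt (K : SComplex V) (d : ℕ) (s : Finset V) : ℝ :=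
  ((K.faces.filter fun t => t.card = d + 1 ∧ s ⊆ t).card : ℝ) /
    (((d + 1).choose s.card : ℝ) * ((K.faces.filter fun t => t.card = d + 1).card : ℝ))

/-- The norm of an `F₂`-cochain, identified with its support (a finite set of faces):
the sum of the weights of the cells in the support. -/
noncomputable def nrm (K : SComplex V) (d : ℕ) (α : Finset (Finset V)) : ℝ :=
  ∑ s ∈ α, K.wt d s

/-- `α` is (the support of) a cochain living on the faces of `K` with `c` vertices
(i.e. a `(c-1)`-dimensional cochain). -/
def IsCochainOn (K : SComplex V) (c : ℕ) (α : Finset (Finset V)) : Prop :=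
  ∀ s ∈ α, s ∈ K.faces ∧ s.card = c

/-- The simplicial coboundary over `F₂` of a cochain `α` supported on faces with `c`
vertices: the faces with `c+1` vertices containing an odd number of elements of `α`. -/
def cobd (K : SComplex V) (c : ℕ) (α : Finset (Finset V)) : Finset (Finset V) :=
  K.faces.filter fun t => t.card = c + 1 ∧ (α.filter fun s => s ⊆ t).card % 2 = 1

/-- `β` is a coboundary among the cochains on faces with `c+1` vertices (i.e. a
`c`-dimensional coboundary, the complex being augmented by `X₋₁ = {∅}`). -/
def IsCobOn (K : SComplex V) (c : ℕ) (β : Finset (Finset V)) : Prop :=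
  ∃ γ, K.IsCochainOn c γ ∧ K.cobd c γ = β

/-- The union of the supports of a finite family of cochains. -/
def unionF {m : ℕ} (f : Fin m → Finset (Finset V)) : Finset (Finset V) :=
  Finset.univ.biUnion f

/-- A collection `α₁, …, α_m` of `k`-cochains is minimal if
`‖⋃ α_a‖ ≤ ‖⋃ (α_a + γ_a)‖` for every collection `γ₁, …, γ_m` of `k`-coboundaries. -/
def IsMinimalCol (K : SComplex V) (d k : ℕ) {m : ℕ} (α : Fin m → Finset (Finset V)) : Prop :=
  ∀ γ : Fin m → Finset (Finset V), (∀ a, K.IsCobOn k (γ a)) →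
    K.nrm d (unionF α) ≤ K.nrm d (unionF fun a => symmDiff (α a) (γ a))

/-- The link of a simplex `σ`. -/
def link (K : SComplex V) (σ : Finset V) : SComplex V where
  faces := K.faces.filter fun τ => τ ∩ σ = ∅ ∧ τ ∪ σ ∈ K.faces
  down_closed := by
    intro s hs t ht
    simp only [Finset.mem_filter] at hs ⊢
    refine ⟨K.down_closed s hs.1 t ht, ?_, ?_⟩
    · exact Finset.subset_empty.mp (hs.2.1 ▸ Finset.inter_subset_inter ht (le_refl σ))
    · exact K.down_closed (s ∪ σ) hs.2.2 (t ∪ σ) (Finset.union_subset_union ht (le_refl σ))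

/-- Localization of a cochain to the link of `σ`: `I_σ(α) = { s \ σ : s ∈ α, σ ⊆ s }`. -/
def locz (σ : Finset V) (α : Finset (Finset V)) : Finset (Finset V) :=
  (α.filter fun s => σ ⊆ s).image fun s => s \ σ

/-- Lifting of a cochain from the link of `σ`: `I^σ(β) = { τ ∪ σ : τ ∈ β }`. -/
def liftz (σ : Finset V) (β : Finset (Finset V)) : Finset (Finset V) :=
  β.image fun τ => τ ∪ σ

/-- A collection of `k`-cochains is locally minimal if all its localizations to links are
minimal collections (in the link, with the link's weight function). -/
def IsLocMinimalCol (K : SComplex V) (d k : ℕ) {m : ℕ}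
    (α : Fin m → Finset (Finset V)) : Prop :=
  ∀ σ ∈ K.faces,
    IsMinimalCol (K.link σ) (d - σ.card) (k - σ.card) (fun a => locz σ (α a))

/-- `K` is a `ρ`-skeleton expander: `‖E(A,A)‖ ≤ 4(‖A‖² + ρ‖A‖)` for every set `A` of
vertices. -/
def SkelExpander (K : SComplex V) (d : ℕ) (ρ : ℝ) : Prop :=
  ∀ A : Finset V, (∀ v ∈ A, ({v} : Finset V) ∈ K.faces) →
    K.nrm d (K.faces.filter fun e => e.card = 2 ∧ e ⊆ A) ≤
      4 * ((K.nrm d (A.image fun v => ({v} : Finset V))) ^ 2 +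
        ρ * K.nrm d (A.image fun v => ({v} : Finset V)))

/-- The `k`-th collective cofilling constant of `K` (w.r.t. the weight function of a
`d`-dimensional complex) is at most `μ`: every finite collection of nonzero
`(k+1)`-coboundaries `β₁, …, β_m` admits `k`-cochains `γ₁, …, γ_m` with `δγ_a = β_a` and
`‖⋃ γ_a‖ ≤ μ ‖⋃ β_a‖`. -/
def CollCofillLE (K : SComplex V) (d k : ℕ) (μ : ℝ) : Prop :=
  ∀ (m : ℕ) (β : Fin m → Finset (Finset V)),
    (∀ a, (β a).Nonempty ∧ K.IsCobOn (k + 1) (β a)) →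
    ∃ γ : Fin m → Finset (Finset V),
      (∀ a, K.IsCochainOn (k + 1) (γ a) ∧ K.cobd (k + 1) (γ a) = β a) ∧
      K.nrm d (unionF γ) ≤ μ * K.nrm d (unionF β)

end SComplex
namespace SComplex

variable {V : Type} [DecidableEq V]

lemma union_sdiff_cancel' {τ σ : Finset V} (h : τ ∩ σ = ∅) : (τ ∪ σ) \ σ = τ := by
  have hd : Disjoint τ σ := Finset.disjoint_iff_inter_eq_empty.mpr h
  rw [Finset.union_sdiff_right, Finset.sdiff_eq_self_of_disjoint hd]

lemma mem_locz' {σ τ : Finset V} {α : Finset (Finset V)} :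
    τ ∈ locz σ α ↔ τ ∩ σ = ∅ ∧ τ ∪ σ ∈ α := by
  simp only [locz, Finset.mem_image, Finset.mem_filter]
  constructor
  · rintro ⟨s, ⟨hs, hσs⟩, rfl⟩
    refine ⟨Finset.sdiff_inter_self _ _, ?_⟩
    rwa [Finset.sdiff_union_of_subset hσs]
  · rintro ⟨hd, hm⟩
    exact ⟨τ ∪ σ, ⟨hm, Finset.subset_union_right⟩, union_sdiff_cancel' hd⟩

lemma mem_liftz' {σ s : Finset V} {β : Finset (Finset V)}
    (hd : ∀ τ ∈ β, τ ∩ σ = ∅) :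
    s ∈ liftz σ β ↔ σ ⊆ s ∧ s \ σ ∈ β := by
  simp only [liftz, Finset.mem_image]
  constructor
  · rintro ⟨τ, hτ, rfl⟩
    exact ⟨Finset.subset_union_right, by rw [union_sdiff_cancel' (hd τ hτ)]; exact hτ⟩
  · rintro ⟨hσs, hm⟩
    exact ⟨s \ σ, hm, Finset.sdiff_union_of_subset hσs⟩

lemma mem_link_faces {K : SComplex V} {σ τ : Finset V} :
    τ ∈ (K.link σ).faces ↔ τ ∈ K.faces ∧ τ ∩ σ = ∅ ∧ τ ∪ σ ∈ K.faces := by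
  simp [link, Finset.mem_filter]

end SComplex
open SComplex in
/-- **Observation 4.4(3) of Kaufman–Tessler**: for a `j`-simplex `σ` of a pure
`d`-dimensional finite simplicial complex, `k`-cochains `α₁, …, α_m` and cochains
`β₁, …, β_m ∈ C^{k-j-1}(X_σ)`: if `‖⋃ α_a‖ ≤ ‖⋃ (α_a + I^σ(β_a))‖` then
`‖⋃ I_σ(α_a)‖_σ ≤ ‖⋃ (I_σ(α_a) + β_a)‖_σ`. -/
theorem localization_norm_mono {V : Type} [DecidableEq V] (K : SComplex V)
    (d j k : ℕ) (hpure : K.IsPure d)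
    (σ : Finset V) (hσ : σ ∈ K.faces) (hσcard : σ.card = j + 1)
    {m : ℕ} (α β : Fin m → Finset (Finset V))
    (hα : ∀ a, K.IsCochainOn (k + 1) (α a))
    (hβ : ∀ a, (K.link σ).IsCochainOn (k - j) (β a))
    (h : K.nrm d (unionF α) ≤ K.nrm d (unionF fun a => symmDiff (α a) (liftz σ (β a)))) :
    (K.link σ).nrm (d - (j + 1)) (unionF fun a => locz σ (α a)) ≤
      (K.link σ).nrm (d - (j + 1)) (unionF fun a => symmDiff (locz σ (α a)) (β a)) := by
  classical
  set L := K.link σ with hLdef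
  set d' := d - (j + 1) with hd'def
  set c := k - j with hcdef
  set P := unionF fun a => locz σ (α a) with hPdef
  set Q := unionF fun a => symmDiff (locz σ (α a)) (β a) with hQdef
  have hβd : ∀ a, ∀ τ ∈ β a, τ ∩ σ = ∅ := fun a τ hτ =>
    (mem_link_faces.mp ((hβ a τ hτ).1)).2.1
  -- every element of P (resp. Q) is a link face of cardinality c
  have hloc : ∀ (a : Fin m), ∀ τ ∈ locz σ (α a), τ ∈ L.faces ∧ τ.card = c := by
    intro a τ hτ
    obtain ⟨hd1, hd2⟩ := mem_locz'.mp hτ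
    obtain ⟨hf, hcard⟩ := hα a _ hd2
    have hdisj : Disjoint τ σ := Finset.disjoint_iff_inter_eq_empty.mpr hd1
    have hcu : (τ ∪ σ).card = τ.card + σ.card := Finset.card_union_of_disjoint hdisj
    have hτf : τ ∈ K.faces := K.down_closed _ hf _ Finset.subset_union_left
    exact ⟨mem_link_faces.mpr ⟨hτf, hd1, hf⟩, by omega⟩
  have hPmem : ∀ τ ∈ P, τ ∈ L.faces ∧ τ.card = c := by
    intro τ hτ
    rw [hPdef, unionF, Finset.mem_biUnion] at hτ
    obtain ⟨a, -, hτ⟩ := hτ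
    exact hloc a τ hτ
  have hQmem : ∀ τ ∈ Q, τ ∈ L.faces ∧ τ.card = c := by
    intro τ hτ
    rw [hQdef, unionF, Finset.mem_biUnion] at hτ
    obtain ⟨a, -, hτ⟩ := hτ
    rcases Finset.mem_symmDiff.mp hτ with ⟨h1, -⟩ | ⟨h1, -⟩
    · exact hloc a τ h1
    · exact hβ a τ h1
  have hPd : ∀ τ ∈ P, τ ∩ σ = ∅ := fun τ hτ => (mem_link_faces.mp (hPmem τ hτ).1).2.1
  have hQd : ∀ τ ∈ Q, τ ∩ σ = ∅ := fun τ hτ => (mem_link_faces.mp (hQmem τ hτ).1).2.1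
  -- Claim 1 : the lifted norms compare in K
  have e1 : (unionF α).filter (fun s => σ ⊆ s) = liftz σ P := by
    ext s
    rw [Finset.mem_filter, mem_liftz' hPd, hPdef]
    simp only [unionF, Finset.mem_biUnion, Finset.mem_univ, true_and, mem_locz']
    constructor
    · rintro ⟨⟨a, ha⟩, hs⟩
      exact ⟨hs, a, Finset.sdiff_inter_self _ _, by rwa [Finset.sdiff_union_of_subset hs]⟩
    · rintro ⟨hs, a, -, ha⟩
      exact ⟨⟨a, by rwa [Finset.sdiff_union_of_subset hs] at ha⟩, hs⟩
  have e2 : (unionF fun a => symmDiff (α a) (liftz σ (β a))).filter (fun s => σ ⊆ s)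
      = liftz σ Q := by
    ext s
    rw [Finset.mem_filter, mem_liftz' hQd, hQdef]
    simp only [unionF, Finset.mem_biUnion, Finset.mem_univ, true_and]
    constructor
    · rintro ⟨⟨a, ha⟩, hs⟩
      refine ⟨hs, a, ?_⟩
      rw [Finset.mem_symmDiff] at ha ⊢
      rw [mem_liftz' (hβd a)] at ha
      rw [mem_locz', Finset.sdiff_union_of_subset hs]
      have hdis : (s \ σ) ∩ σ = ∅ := Finset.sdiff_inter_self _ _
      tauto
    · rintro ⟨hs, a, ha⟩
      refine ⟨⟨a, ?_⟩, hs⟩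
      rw [Finset.mem_symmDiff] at ha ⊢
      rw [mem_locz', Finset.sdiff_union_of_subset hs] at ha
      rw [mem_liftz' (hβd a)]
      tauto
  have e0 : (unionF α).filter (fun s => ¬ σ ⊆ s)
      = (unionF fun a => symmDiff (α a) (liftz σ (β a))).filter (fun s => ¬ σ ⊆ s) := by
    ext s
    simp only [Finset.mem_filter, unionF, Finset.mem_biUnion, Finset.mem_univ, true_and]
    refine and_congr_left fun hs => exists_congr fun a => ?_
    have hnl : s ∉ liftz σ (β a) := fun hc => hs ((mem_liftz' (hβd a)).mp hc).1
    rw [Finset.mem_symmDiff]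
    tauto
  have key1 : K.nrm d (liftz σ P) ≤ K.nrm d (liftz σ Q) := by
    have s1 := Finset.sum_filter_add_sum_filter_not (unionF α) (fun s => σ ⊆ s) (K.wt d)
    have s2 := Finset.sum_filter_add_sum_filter_not
      (unionF fun a => symmDiff (α a) (liftz σ (β a))) (fun s => σ ⊆ s) (K.wt d)
    have h' := h
    rw [nrm, nrm, ← s1, ← s2, e1, e2, ← e0] at h'
    rw [nrm, nrm]
    linarith
  -- norm of a lifted family
  have hlift : ∀ S : Finset (Finset V), (∀ τ ∈ S, τ ∩ σ = ∅) →
      K.nrm d (liftz σ S) = ∑ τ ∈ S, K.wt d (τ ∪ σ) := by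
    intro S hS
    rw [nrm, liftz, Finset.sum_image]
    intro a ha b hb hab
    have h2 := congrArg (· \ σ) hab
    simpa [union_sdiff_cancel' (hS a ha), union_sdiff_cancel' (hS b hb)] using h2
  -- abbreviations for the top-face counts
  set M'n := (L.faces.filter fun t => t.card = d' + 1).card with hM'def
  by_cases hM' : M'n = 0
  · -- the link has no top faces: all link weights vanish
    have hz : ∀ S : Finset (Finset V), L.nrm d' S = 0 := by
      intro S
      rw [nrm]
      refine Finset.sum_eq_zero fun s _ => ?_
      rw [wt, ← hM'def, hM']
      simp
    rw [hz, hz]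
  · -- the link has a top face
    obtain ⟨t₀, ht₀⟩ := Finset.card_ne_zero.mp hM'
    rw [Finset.mem_filter] at ht₀
    obtain ⟨ht₀L, ht₀c⟩ := ht₀
    obtain ⟨ht₀f, ht₀d, ht₀u⟩ := mem_link_faces.mp ht₀L
    have ht₀uc : (t₀ ∪ σ).card = (d' + 1) + (j + 1) := by
      rw [Finset.card_union_of_disjoint (Finset.disjoint_iff_inter_eq_empty.mpr ht₀d),
        ht₀c, hσcard]
    have hle : (d' + 1) + (j + 1) ≤ d + 1 := ht₀uc ▸ (hpure _ ht₀u).1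
    have hjd : j + 1 ≤ d := by omega
    have hd'j : d' + 1 = d - j := by omega
    -- link faces extend to top link faces
    have hext : ∀ τ ∈ L.faces, ∃ t ∈ L.faces, t.card = d - j ∧ τ ⊆ t := by
      intro τ hτ
      obtain ⟨hτf, hτd, hτu⟩ := mem_link_faces.mp hτ
      obtain ⟨t', ht'f, ht'c, ht'sub⟩ := (hpure _ hτu).2
      have hσt' : σ ⊆ t' := Finset.subset_union_right.trans ht'sub
      refine ⟨t' \ σ, mem_link_faces.mpr ⟨K.down_closed _ ht'f _ (Finset.sdiff_subset),
        Finset.sdiff_inter_self _ _, by rwa [Finset.sdiff_union_of_subset hσt']⟩, ?_, ?_⟩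
      · rw [Finset.card_sdiff_of_subset hσt', ht'c, hσcard]; omega
      · intro x hx
        refine Finset.mem_sdiff.mpr ⟨ht'sub (Finset.mem_union_left _ hx), fun hxσ => ?_⟩
        have : x ∈ τ ∩ σ := Finset.mem_inter.mpr ⟨hx, hxσ⟩
        rw [hτd] at this
        exact absurd this (Finset.notMem_empty x)
    by_cases hPQ : P = ∅ ∧ Q = ∅
    · rw [hPQ.1, hPQ.2]
    · -- some element exists, so c ≤ d - j
      have hc : c ≤ d - j := by
        have : ∃ τ, τ ∈ L.faces ∧ τ.card = c := by
          rcases not_and_or.mp hPQ with hne | hne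
          · obtain ⟨τ, hτ⟩ := Finset.nonempty_iff_ne_empty.mpr hne
            exact ⟨τ, hPmem τ hτ⟩
          · obtain ⟨τ, hτ⟩ := Finset.nonempty_iff_ne_empty.mpr hne
            exact ⟨τ, hQmem τ hτ⟩
        obtain ⟨τ, hτL, hτc⟩ := this
        obtain ⟨t, -, htc, hsub⟩ := hext τ hτL
        have := Finset.card_le_card hsub
        omega
      set Mn := (K.faces.filter fun t => t.card = d + 1).card with hMdef
      have hM : 0 < Mn := by
        obtain ⟨t, htf, htc, -⟩ := (hpure σ hσ).2
        exact Finset.card_pos.mpr ⟨t, Finset.mem_filter.mpr ⟨htf, htc⟩⟩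
      set r : ℝ := (((d + 1).choose (c + (j + 1)) : ℝ) * (Mn : ℝ)) /
        ((((d' + 1).choose c : ℝ)) * (M'n : ℝ)) with hrdef
      have hCpos : 0 < (d + 1).choose (c + (j + 1)) := Nat.choose_pos (by omega)
      have hC'pos : 0 < (d' + 1).choose c := Nat.choose_pos (by omega)
      have hM'pos : 0 < M'n := Nat.pos_of_ne_zero hM'
      have hr : 0 < r := by
        apply div_pos
        · exact mul_pos (by exact_mod_cast hCpos) (by exact_mod_cast hM)
        · exact mul_pos (by exact_mod_cast hC'pos) (by exact_mod_cast hM'pos)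
      -- the weight comparison
      have hwt : ∀ τ ∈ L.faces, τ.card = c → L.wt d' τ = r * K.wt d (τ ∪ σ) := by
        intro τ hτL hτc
        obtain ⟨hτf, hτd, hτu⟩ := mem_link_faces.mp hτL
        have hτuc : (τ ∪ σ).card = c + (j + 1) := by
          rw [Finset.card_union_of_disjoint (Finset.disjoint_iff_inter_eq_empty.mpr hτd),
            hτc, hσcard]
        have hNN : (L.faces.filter fun t => t.card = d' + 1 ∧ τ ⊆ t).card
            = (K.faces.filter fun t => t.card = d + 1 ∧ τ ∪ σ ⊆ t).card := by
          apply Finset.card_bij (fun t _ => t ∪ σ)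
          · intro t ht
            rw [Finset.mem_filter] at ht
            obtain ⟨htL, htc, hτt⟩ := ht
            obtain ⟨htf, htd, htu⟩ := mem_link_faces.mp htL
            refine Finset.mem_filter.mpr ⟨htu, ?_, Finset.union_subset_union hτt le_rfl⟩
            rw [Finset.card_union_of_disjoint (Finset.disjoint_iff_inter_eq_empty.mpr htd),
              htc, hσcard]
            omega
          · intro a ha b hb hab
            rw [Finset.mem_filter] at ha hb
            have hda := (mem_link_faces.mp ha.1).2.1
            have hdb := (mem_link_faces.mp hb.1).2.1
            have h2 := congrArg (· \ σ) hab
            simpa [union_sdiff_cancel' hda, union_sdiff_cancel' hdb] using h2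
          · intro t' ht'
            rw [Finset.mem_filter] at ht'
            obtain ⟨ht'f, ht'c, ht'sub⟩ := ht'
            have hσt' : σ ⊆ t' := Finset.subset_union_right.trans ht'sub
            refine ⟨t' \ σ, Finset.mem_filter.mpr ⟨mem_link_faces.mpr
              ⟨K.down_closed _ ht'f _ Finset.sdiff_subset, Finset.sdiff_inter_self _ _,
                by rwa [Finset.sdiff_union_of_subset hσt']⟩, ?_, ?_⟩,
              Finset.sdiff_union_of_subset hσt'⟩
            · rw [Finset.card_sdiff_of_subset hσt', ht'c, hσcard]; omega
            · intro x hx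
              have hxτσ : x ∈ τ ∪ σ := Finset.mem_union_left _ hx
              refine Finset.mem_sdiff.mpr ⟨ht'sub hxτσ, fun hxσ => ?_⟩
              have : x ∈ τ ∩ σ := Finset.mem_inter.mpr ⟨hx, hxσ⟩
              rw [hτd] at this
              exact absurd this (Finset.notMem_empty x)
        rw [wt, wt, hτc, hτuc, ← hM'def, ← hMdef, hNN, hrdef]
        have hCne : ((d + 1).choose (c + (j + 1)) : ℝ) ≠ 0 := by exact_mod_cast hCpos.ne'
        have hMne : (Mn : ℝ) ≠ 0 := by exact_mod_cast hM.ne'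
        have hC'ne : (((d' + 1).choose c : ℕ) : ℝ) ≠ 0 := by exact_mod_cast hC'pos.ne'
        have hM'ne : (M'n : ℝ) ≠ 0 := by exact_mod_cast hM'pos.ne'
        field_simp
      -- express the link norms via lifted norms
      have hnrm : ∀ S : Finset (Finset V), (∀ τ ∈ S, τ ∈ L.faces ∧ τ.card = c) →
          L.nrm d' S = r * K.nrm d (liftz σ S) := by
        intro S hS
        have hSd : ∀ τ ∈ S, τ ∩ σ = ∅ := fun τ hτ => (mem_link_faces.mp (hS τ hτ).1).2.1
        rw [hlift S hSd, nrm, Finset.mul_sum]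
        exact Finset.sum_congr rfl fun τ hτ => hwt τ (hS τ hτ).1 (hS τ hτ).2
      rw [hnrm P hPmem, hnrm Q hQmem]
      exact mul_le_mul_of_nonneg_left key1 hr.le
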